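/- Let A : R^{n₁×n₂} → R^m be a linear map satisfying the rank-2r restricted isometry property with constant δ ∈ [0,1): for every matrix M of rank at most 2r, (1−δ)‖M‖_F² ≤ ‖A(M)‖₂² ≤ (1+δ)‖M‖_F². Then for any matrix X₁ of rank at most r and any matrix R ∈ R^{n₂×r}, one has ‖(A*A − I)(X₁)·R‖_F ≤ δ·‖X₁‖_F·‖R‖_op, where A* is the adjoint of A and I the identity map. -/

import Mathlib

open Matrix

/-- Frobenius norm of a real matrix. -/
noncomputable def frob {n₁ n₂ : ℕ} (A : Matrix (Fin n₁) (Fin n₂) ℝ) : ℝ :=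
  Real.sqrt (∑ i, ∑ j, (A i j) ^ 2)

/-- The operator norm (largest singular value) of a matrix. -/
noncomputable def opNorm {n₁ n₂ : ℕ} (A : Matrix (Fin n₁) (Fin n₂) ℝ) : ℝ :=
  ‖LinearMap.toContinuousLinearMap (Matrix.toEuclideanLin A)‖

/-!
Polarizing the restricted isometry property on the span of two matrices of rank at most `r`
gives `⟨𝓐 X, 𝓐 Y⟩ - ⟨X, Y⟩ ≤ δ ‖X‖_F ‖Y‖_F`. With `E = (𝓐*𝓐 - I) X₁` apply this to
`Y = (E R) Rᵀ`, of rank at most `r`: adjointness gives `⟨E, Y⟩ = ‖E R‖_F²` on the one hand and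
`⟨E, Y⟩ = ⟨𝓐 X₁, 𝓐 Y⟩ - ⟨X₁, Y⟩` on the other, while `‖Y‖_F ≤ ‖E R‖_F ‖R‖_op` row by row.
Hence `‖E R‖_F² ≤ δ ‖X₁‖_F ‖E R‖_F ‖R‖_op`.
-/

open RealInnerProductSpace WithLp

section InnerProductSpace

variable {E F : Type*} [NormedAddCommGroup E] [InnerProductSpace ℝ E]
  [NormedAddCommGroup F] [InnerProductSpace ℝ F]

theorem inner_sub_inner_le_of_norm_add_of_norm_sub {x y : E} {x' y' : F} {δ : ℝ}
    (hadd : ‖x' + y'‖ ^ 2 ≤ (1 + δ) * ‖x + y‖ ^ 2)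
    (hsub : (1 - δ) * ‖x - y‖ ^ 2 ≤ ‖x' - y'‖ ^ 2) :
    ⟪x', y'⟫ - ⟪x, y⟫ ≤ δ / 2 * (‖x‖ ^ 2 + ‖y‖ ^ 2) := by
  rw [norm_add_sq_real, norm_add_sq_real] at hadd
  rw [norm_sub_sq_real, norm_sub_sq_real] at hsub
  linarith

theorem inner_sub_inner_le_of_forall_smul_add_smul {x y : E} {x' y' : F} {δ : ℝ}
    (h : ∀ s t : ℝ, (1 - δ) * ‖s • x + t • y‖ ^ 2 ≤ ‖s • x' + t • y'‖ ^ 2 ∧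
      ‖s • x' + t • y'‖ ^ 2 ≤ (1 + δ) * ‖s • x + t • y‖ ^ 2) :
    ⟪x', y'⟫ - ⟪x, y⟫ ≤ δ * ‖x‖ * ‖y‖ := by
  obtain rfl | hx := eq_or_ne x 0
  · obtain rfl : x' = 0 := by simpa using (h 1 0).2
    simp
  obtain rfl | hy := eq_or_ne y 0
  · obtain rfl : y' = 0 := by simpa using (h 0 1).2
    simp
  have hpos : 0 < ‖x‖ * ‖y‖ := by positivity
  -- polarize at `‖y‖ • x` and `‖x‖ • y`, which have equal norms
  have key := inner_sub_inner_le_of_norm_add_of_norm_sub (x := ‖y‖ • x) (y := ‖x‖ • y)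
    (x' := ‖y‖ • x') (y' := ‖x‖ • y') (δ := δ) (h ‖y‖ ‖x‖).2 (by
      simpa only [sub_eq_add_neg, ← neg_smul] using (h ‖y‖ (-‖x‖)).1)
  simp only [inner_smul_left, inner_smul_right, norm_smul, norm_norm, conj_trivial] at key
  refine le_of_mul_le_mul_left ?_ hpos
  nlinarith

end InnerProductSpace

namespace Matrix

variable {m n : Type*} [Fintype n]

theorem rank_smul_add_smul_le {K : Type*} [Field K] (s t : K) (A B : Matrix m n K) :
    (s • A + t • B).rank ≤ A.rank + B.rank := by
  have hrange : LinearMap.range (s • A + t • B).mulVecLin ≤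
      LinearMap.range A.mulVecLin ⊔ LinearMap.range B.mulVecLin := by
    rintro _ ⟨v, rfl⟩
    have : (s • A + t • B).mulVecLin v = A.mulVecLin (s • v) + B.mulVecLin (t • v) := by
      simp only [mulVecLin_apply, add_mulVec, smul_mulVec, mulVec_smul]
    rw [this]
    exact Submodule.add_mem_sup ⟨_, rfl⟩ ⟨_, rfl⟩
  exact (Submodule.finrank_mono hrange).trans (Submodule.finrank_add_le_finrank_add_finrank _ _)

theorem sum_mul_mul_transpose {k α : Type*} [Fintype m] [Fintype k] [CommSemiring α]
    (A : Matrix m n α) (B : Matrix m k α) (C : Matrix n k α) :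
    ∑ i, ∑ j, A i j * (B * Cᵀ) i j = ∑ i, ∑ l, (A * C) i l * B i l := by
  simp only [mul_apply, transpose_apply, Finset.mul_sum, Finset.sum_mul]
  refine Finset.sum_congr rfl fun i _ => Finset.sum_comm.trans ?_
  exact Finset.sum_congr rfl fun l _ => Finset.sum_congr rfl fun j _ => by ring

def frobVec [Fintype m] : Matrix m n ℝ →ₗ[ℝ] EuclideanSpace ℝ (m × n) where
  toFun A := toLp 2 fun p => A p.1 p.2
  map_add' _ _ := rfl
  map_smul' _ _ := rfl

theorem inner_frobVec [Fintype m] (A B : Matrix m n ℝ) :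
    ⟪frobVec A, frobVec B⟫ = ∑ i, ∑ j, A i j * B i j := by
  change ⟪toLp 2 _, toLp 2 _⟫ = _
  simp only [EuclideanSpace.inner_toLp_toLp, dotProduct, Fintype.sum_prod_type, star_trivial,
    mul_comm]

end Matrix

theorem frob_nonneg {n₁ n₂ : ℕ} (A : Matrix (Fin n₁) (Fin n₂) ℝ) : 0 ≤ frob A :=
  Real.sqrt_nonneg _

theorem frob_sq {n₁ n₂ : ℕ} (A : Matrix (Fin n₁) (Fin n₂) ℝ) :
    frob A ^ 2 = ∑ i, ∑ j, A i j ^ 2 :=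
  Real.sq_sqrt <| Finset.sum_nonneg fun _ _ => Finset.sum_nonneg fun _ _ => sq_nonneg _

theorem frob_eq_norm_frobVec {n₁ n₂ : ℕ} (A : Matrix (Fin n₁) (Fin n₂) ℝ) :
    frob A = ‖frobVec A‖ := by
  rw [EuclideanSpace.norm_eq, frob, Fintype.sum_prod_type]
  simp only [Real.norm_eq_abs, sq_abs]
  rfl

theorem frob_sq_eq_sum_norm_row {n₁ n₂ : ℕ} (A : Matrix (Fin n₁) (Fin n₂) ℝ) :
    frob A ^ 2 = ∑ i, ‖toLp 2 (A i)‖ ^ 2 := by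
  simp [frob_sq, EuclideanSpace.real_norm_sq_eq]

theorem norm_toLp_mulVec_le_opNorm {n₁ n₂ : ℕ} (R : Matrix (Fin n₁) (Fin n₂) ℝ)
    (v : Fin n₂ → ℝ) :
    ‖toLp 2 (R *ᵥ v)‖ ≤ opNorm R * ‖toLp 2 v‖ :=
  (LinearMap.toContinuousLinearMap (toEuclideanLin R)).le_opNorm (toLp 2 v)

theorem frob_mul_transpose_le {n₁ n₂ k : ℕ} (N : Matrix (Fin n₁) (Fin k) ℝ)
    (R : Matrix (Fin n₂) (Fin k) ℝ) : frob (N * Rᵀ) ≤ frob N * opNorm R := by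
  have hrow (i : Fin n₁) : (N * Rᵀ) i = R *ᵥ N i := by
    ext j; rw [mul_apply_eq_vecMul, vecMul_transpose]
  have hsq : frob (N * Rᵀ) ^ 2 ≤ (frob N * opNorm R) ^ 2 := by
    rw [frob_sq_eq_sum_norm_row, mul_pow, frob_sq_eq_sum_norm_row, Finset.sum_mul]
    refine Finset.sum_le_sum fun i _ => ?_
    rw [hrow, ← mul_pow, mul_comm]
    exact pow_le_pow_left₀ (norm_nonneg _) (norm_toLp_mulVec_le_opNorm R (N i)) 2
  exact (pow_le_pow_iff_left₀ (frob_nonneg _)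
    (mul_nonneg (frob_nonneg _) (norm_nonneg _)) two_ne_zero).1 hsq

def HasRIP {n₁ n₂ m : ℕ} (𝓐 : Matrix (Fin n₁) (Fin n₂) ℝ →ₗ[ℝ] (Fin m → ℝ)) (k : ℕ) (δ : ℝ) :
    Prop :=
  ∀ M : Matrix (Fin n₁) (Fin n₂) ℝ, M.rank ≤ k →
    (1 - δ) * frob M ^ 2 ≤ ∑ l, 𝓐 M l ^ 2 ∧ ∑ l, 𝓐 M l ^ 2 ≤ (1 + δ) * frob M ^ 2

theorem HasRIP.sum_mul_sub_sum_mul_le {n₁ n₂ m r : ℕ}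
    {𝓐 : Matrix (Fin n₁) (Fin n₂) ℝ →ₗ[ℝ] (Fin m → ℝ)} {δ : ℝ} (h𝓐 : HasRIP 𝓐 (2 * r) δ)
    {X Y : Matrix (Fin n₁) (Fin n₂) ℝ} (hX : X.rank ≤ r) (hY : Y.rank ≤ r) :
    ∑ l, 𝓐 X l * 𝓐 Y l - ∑ i, ∑ j, X i j * Y i j ≤ δ * frob X * frob Y := by
  have key := inner_sub_inner_le_of_forall_smul_add_smul (x := frobVec X) (y := frobVec Y)
      (x' := toLp 2 (𝓐 X)) (y' := toLp 2 (𝓐 Y)) (δ := δ) fun s t => by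
    have hvec : s • frobVec X + t • frobVec Y = frobVec (s • X + t • Y) := by simp
    have himg : s • toLp 2 (𝓐 X) + t • toLp 2 (𝓐 Y) = toLp 2 (𝓐 (s • X + t • Y)) := by simp
    rw [hvec, himg, ← frob_eq_norm_frobVec, EuclideanSpace.real_norm_sq_eq]
    exact h𝓐 _ ((rank_smul_add_smul_le s t X Y).trans (by omega))
  rw [inner_frobVec, EuclideanSpace.inner_toLp_toLp, ← frob_eq_norm_frobVec,
    ← frob_eq_norm_frobVec] at key
  simpa only [dotProduct, star_trivial, mul_comm] using key

theorem rip_adjoint_residual_bound_general {n₁ n₂ m r : ℕ}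
    (𝓐 : Matrix (Fin n₁) (Fin n₂) ℝ →ₗ[ℝ] (Fin m → ℝ))
    (δ : ℝ) (hδ0 : 0 ≤ δ)
    (hRIP : ∀ M : Matrix (Fin n₁) (Fin n₂) ℝ, M.rank ≤ 2 * r →
      (1 - δ) * (frob M) ^ 2 ≤ ∑ k, (𝓐 M k) ^ 2 ∧
      ∑ k, (𝓐 M k) ^ 2 ≤ (1 + δ) * (frob M) ^ 2)
    (Aadj : (Fin m → ℝ) → Matrix (Fin n₁) (Fin n₂) ℝ)
    (hAadj : ∀ (y : Fin m → ℝ) (M : Matrix (Fin n₁) (Fin n₂) ℝ),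
      ∑ i, ∑ j, Aadj y i j * M i j = ∑ k, y k * 𝓐 M k)
    (X₁ : Matrix (Fin n₁) (Fin n₂) ℝ) (hX₁ : X₁.rank ≤ r)
    (R : Matrix (Fin n₂) (Fin r) ℝ) :
    frob ((Aadj (𝓐 X₁) - X₁) * R) ≤ δ * frob X₁ * opNorm R := by
  set N := (Aadj (𝓐 X₁) - X₁) * R
  have hrank : (N * Rᵀ).rank ≤ r :=
    (rank_mul_le_right _ _).trans (by simpa using rank_le_card_height Rᵀ)
  have hsq : frob N ^ 2 = ∑ k, 𝓐 X₁ k * 𝓐 (N * Rᵀ) k - ∑ i, ∑ j, X₁ i j * (N * Rᵀ) i j :=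
    calc frob N ^ 2 = ∑ i, ∑ l, N i l * N i l := by simp only [frob_sq, ← sq]
      _ = ∑ i, ∑ j, (Aadj (𝓐 X₁) - X₁) i j * (N * Rᵀ) i j := (sum_mul_mul_transpose _ _ _).symm
      _ = _ := by simp only [Matrix.sub_apply, sub_mul, Finset.sum_sub_distrib, hAadj]
  have hbound : frob N ^ 2 ≤ δ * frob X₁ * (frob N * opNorm R) := by
    rw [hsq]
    exact (HasRIP.sum_mul_sub_sum_mul_le hRIP hX₁ hrank).trans
      (mul_le_mul_of_nonneg_left (frob_mul_transpose_le N R) (mul_nonneg hδ0 (frob_nonneg X₁)))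
  rcases (frob_nonneg N).eq_or_lt with hN | hN
  · rw [← hN]; exact mul_nonneg (mul_nonneg hδ0 (frob_nonneg X₁)) (norm_nonneg _)
  · nlinarith

/-- RIP consequence: if the linear map `𝓐` satisfies the rank-`2r` restricted isometry
property with constant `δ`, then for any matrix `X₁` of rank at most `r` and any `R`,
`‖(𝓐*𝓐 − I)(X₁) R‖_F ≤ δ ‖X₁‖_F ‖R‖_op`, where `𝓐*` is the adjoint of `𝓐`. -/
theorem rip_adjoint_residual_bound {n₁ n₂ m r : ℕ}
    (𝓐 : Matrix (Fin n₁) (Fin n₂) ℝ →ₗ[ℝ] (Fin m → ℝ))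
    (δ : ℝ) (hδ0 : 0 ≤ δ) (hδ1 : δ < 1)
    (hRIP : ∀ M : Matrix (Fin n₁) (Fin n₂) ℝ, M.rank ≤ 2 * r →
      (1 - δ) * (frob M) ^ 2 ≤ ∑ k, (𝓐 M k) ^ 2 ∧
      ∑ k, (𝓐 M k) ^ 2 ≤ (1 + δ) * (frob M) ^ 2)
    (Aadj : (Fin m → ℝ) → Matrix (Fin n₁) (Fin n₂) ℝ)
    (hAadj : ∀ (y : Fin m → ℝ) (M : Matrix (Fin n₁) (Fin n₂) ℝ),
      ∑ i, ∑ j, Aadj y i j * M i j = ∑ k, y k * 𝓐 M k)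
    (X₁ : Matrix (Fin n₁) (Fin n₂) ℝ) (hX₁ : X₁.rank ≤ r)
    (R : Matrix (Fin n₂) (Fin r) ℝ) :
    frob ((Aadj (𝓐 X₁) - X₁) * R) ≤ δ * frob X₁ * opNorm R :=
  rip_adjoint_residual_bound_general 𝓐 δ hδ0 hRIP Aadj hAadj X₁ hX₁ R
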